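/- Let G be a finite simple graph with an acyclic proper vertex k-coloring c_V. Then there exists an edge coloring c_E of G with the same k colors such that: (1) every edge colored a has at least one endpoint v with c_V(v) = a; and (2) for every vertex v and every color a ≠ c_V(v), the vertex v is incident to at most one edge of color a. In particular, each color class of c_E is a star forest in which the center of every star with at least two edges has that color under c_V. -/

import Mathlib

/-!
For two colors `a, b` the edges of `G` between the color classes of `a` and `b` form a forest.
Rooting every tree of that forest gives each vertex at most one parent, and every edge joins a
vertex to its parent. Color each edge by the vertex color of its parent endpoint. An edge at `v`
whose color `a` differs from `cV v` then leads to the parent of `v` in the `{cV v, a}`-forest,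
so there is at most one such edge.
-/

open Finset SimpleGraph
open scoped Classical

/-- `cV` is an acyclic proper vertex coloring of `G` with `k` colors: adjacent
vertices get distinct colors, and the subgraph induced by the union of any two
color classes contains no cycle. -/
def IsAcyclicProperColoring {V : Type*} (G : SimpleGraph V) {k : ℕ}
    (cV : V → Fin k) : Prop :=
  (∀ u v, G.Adj u v → cV u ≠ cV v) ∧
  ∀ a b : Fin k,
    (SimpleGraph.fromRel fun u v =>
      G.Adj u v ∧ (cV u = a ∨ cV u = b) ∧ (cV v = a ∨ cV v = b)).IsAcyclic

namespace SimpleGraph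

variable {V : Type*} {G : SimpleGraph V}

theorem IsAcyclic.snd_eq_or_snd_eq_of_adj (h : G.IsAcyclic) {u v r : V} {p : G.Walk u r}
    {q : G.Walk v r} (hp : p.IsPath) (hq : q.IsPath) (huv : G.Adj u v) :
    p.snd = v ∨ q.snd = u := by
  by_cases hu : u ∈ q.support
  · exact Or.inr (h.eq_snd_of_adj_start hq huv.symm hu).symm
  · have hv : v ∈ p.reverse.support :=
      h.mem_support_of_ne_mem_support_of_adj_of_isPath hp.reverse hq.reverse huv
        (by simpa using hu)
    exact Or.inl (h.eq_snd_of_adj_start hp huv (by simpa using hv)).symm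

theorem IsAcyclic.exists_parent (h : G.IsAcyclic) :
    ∃ f : V → V, ∀ ⦃u v⦄, G.Adj u v → f u = v ∨ f v = u := by
  have hreach : ∀ v, G.Reachable v (G.connectedComponentMk v).out := fun v =>
    ConnectedComponent.exact (Quot.out_eq _).symm
  choose p hp using fun v => (hreach v).exists_isPath
  -- the parent of `v` is the next vertex on its path to the root of its component
  refine ⟨fun v => (p v).snd, fun u v huv => ?_⟩
  have key : ∀ {r r' : V} {p : G.Walk u r} {q : G.Walk v r'}, p.IsPath → q.IsPath → r = r' →
      p.snd = v ∨ q.snd = u := by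
    rintro r _ p q hp hq rfl
    exact h.snd_eq_or_snd_eq_of_adj hp hq huv
  exact key (hp u) (hp v) (by rw [ConnectedComponent.connectedComponentMk_eq_of_adj huv])

variable {α : Type*}

def bichromaticGraph (G : SimpleGraph V) (c : V → α) (p : Sym2 α) : SimpleGraph V :=
  SimpleGraph.fromRel fun u v => G.Adj u v ∧ c u ∈ p ∧ c v ∈ p

theorem bichromaticGraph_adj_of_adj {c : V → α} {u v : V} (h : G.Adj u v) :
    (G.bichromaticGraph c s(c u, c v)).Adj u v :=
  (fromRel_adj _ _ _).mpr ⟨h.ne, Or.inl ⟨h, Sym2.mem_mk_left _ _, Sym2.mem_mk_right _ _⟩⟩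

end SimpleGraph

theorem IsAcyclicProperColoring.isAcyclic_bichromaticGraph {V : Type*} {G : SimpleGraph V}
    {k : ℕ} {cV : V → Fin k} (h : IsAcyclicProperColoring G cV) (p : Sym2 (Fin k)) :
    (G.bichromaticGraph cV p).IsAcyclic := by
  induction p using Sym2.ind with
  | _ a b => simpa only [bichromaticGraph, Sym2.mem_iff] using h.2 a b

section ParentColoring

variable {V α : Type*} [LinearOrder α] (c : V → α) (F : Sym2 α → V → V)

/-- `F p u = v` says that `v` is the parent of `u` in the forest of color pair `p`; the edge `uv`
gets the color of its parent endpoint, and the `max` branch only keeps the rule symmetric. -/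
noncomputable def parentEdgeColoring : Sym2 V → α :=
  Sym2.lift ⟨fun u v =>
    let f := F s(c u, c v)
    if f u = v ∧ f v ≠ u then c v else if f v = u ∧ f u ≠ v then c u else max (c u) (c v),
    fun u v => by
      dsimp only
      rw [Sym2.eq_swap]
      by_cases huv : F s(c v, c u) u = v <;> by_cases hvu : F s(c v, c u) v = u <;>
        simp [huv, hvu, max_comm]⟩

variable {c F}

theorem parentEdgeColoring_mk_eq_or_eq (u v : V) :
    parentEdgeColoring c F s(u, v) = c u ∨ parentEdgeColoring c F s(u, v) = c v := by
  simp only [parentEdgeColoring, Sym2.lift_mk]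
  split_ifs
  · exact Or.inr rfl
  · exact Or.inl rfl
  · exact max_choice _ _

theorem parent_eq_of_parentEdgeColoring_ne {u v : V}
    (hF : F s(c u, c v) u = v ∨ F s(c u, c v) v = u)
    (hne : parentEdgeColoring c F s(u, v) ≠ c u) : F s(c u, c v) u = v := by
  by_contra hu
  simp only [parentEdgeColoring, Sym2.lift_mk] at hne
  simp [hu, hF.resolve_left hu] at hne

end ParentColoring

/-- Given an acyclic proper vertex `k`-coloring `cV` of a finite simple
graph `G`, there is an edge coloring `cE` with the same `k` colors such that:
(1) every edge colored `a` has an endpoint of vertex color `a`; and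
(2) every vertex `v` is incident to at most one edge of each color `a ≠ cV v`.
(Hence each color class of `cE` is a star forest whose nontrivial stars are centered
at vertices of that vertex color.) -/
theorem stmt9 {V : Type*} [Fintype V] (G : SimpleGraph V) (k : ℕ)
    (cV : V → Fin k) (hcV : IsAcyclicProperColoring G cV) :
    ∃ cE : Sym2 V → Fin k,
      (∀ u v, G.Adj u v → cE s(u, v) = cV u ∨ cE s(u, v) = cV v) ∧
      (∀ v (a : Fin k), a ≠ cV v →
        (univ.filter fun u => G.Adj v u ∧ cE s(v, u) = a).card ≤ 1) := by
  choose F hF using fun p => (hcV.isAcyclic_bichromaticGraph p).exists_parent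
  refine ⟨parentEdgeColoring cV F, fun u v _ => parentEdgeColoring_mk_eq_or_eq u v, ?_⟩
  intro v a ha
  suffices parent_eq : ∀ u, G.Adj v u → parentEdgeColoring cV F s(v, u) = a →
      F s(cV v, a) v = u by
    refine card_le_one.mpr fun u hu w hw => ?_
    simp only [mem_filter] at hu hw
    exact (parent_eq u hu.2.1 hu.2.2).symm.trans (parent_eq w hw.2.1 hw.2.2)
  intro u hvu hcolor
  have hcu : cV u = a :=
    ((parentEdgeColoring_mk_eq_or_eq v u).resolve_left (hcolor ▸ ha)).symm.trans hcolor
  subst hcu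
  exact parent_eq_of_parentEdgeColoring_ne (hF _ (bichromaticGraph_adj_of_adj hvu)) (hcolor ▸ ha)
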